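/- arXiv:1602.00327 — 4 statements merged into one kernel-verified Lean document; each statement's English description precedes it below -/
import Mathlib

section
/- Let S be a numerical semigroup with multiplicity e, and let s ∈ S with a maximal representation s = Σ a_j n_j (so Σ a_j = ord(s)). If s' = Σ b_j n_j with 0 ≤ b_j ≤ a_j for all j, then ord(s') = Σ b_j. -/
open Set

/-- A numerical semigroup: a cofinite submonoid of ℕ. -/
def IsNumSgp (S : Set ℕ) : Prop :=
  0 ∈ S ∧ (∀ a ∈ S, ∀ b ∈ S, a + b ∈ S) ∧ Sᶜ.Finite

/-- The maximal ideal `M = S \ {0}`. -/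
def MS (S : Set ℕ) : Set ℕ := S \ {0}

/-- The multiplicity `e` of `S`, the smallest nonzero element. -/
noncomputable def mult (S : Set ℕ) : ℕ := sInf (MS S)

/-- `nM S h` is the set of sums of `h` elements of `M = S \ {0}` (with `nM S 0 = {0}`). -/
def nM (S : Set ℕ) : ℕ → Set ℕ
  | 0 => {0}
  | k + 1 => {x | ∃ a ∈ MS S, ∃ b ∈ nM S k, x = a + b}

/-- The order of `s`: the largest `h` with `s ∈ hM`. -/
noncomputable def ordS (S : Set ℕ) (s : ℕ) : ℕ := sSup {h | s ∈ nM S h}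

/-- The Apéry set of `S` with respect to the multiplicity `e`:
elements `s ∈ S` with `s - e ∉ S`. -/
def Ap (S : Set ℕ) : Set ℕ := {s ∈ S | ∀ t ∈ S, t + mult S ≠ s}

/-- Elements of the Apéry set of order `k`. -/
def ApK (S : Set ℕ) (k : ℕ) : Set ℕ := {s ∈ Ap S | ordS S s = k}

/-- `C_k = {s ∈ S : ord s = k and s - e ∉ (k-1)M}`. -/
def CK (S : Set ℕ) (k : ℕ) : Set ℕ :=
  {s ∈ S | ordS S s = k ∧ ∀ t ∈ nM S (k - 1), t + mult S ≠ s}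

/-- `D_k = {s ∈ S : ord s = k-1 and ord (s+e) > k}`. -/
def DK (S : Set ℕ) (k : ℕ) : Set ℕ :=
  {s ∈ S | ordS S s = k - 1 ∧ k < ordS S (s + mult S)}

/-- The Hilbert function of `R = k[[S]]`: `H(0) = 1`, `H(n) = |nM \ (n+1)M|`. -/
noncomputable def HF (S : Set ℕ) (n : ℕ) : ℕ := (nM S n \ nM S (n + 1)).ncard

/-- The set of minimal generators of `S`. -/
def MinGens (S : Set ℕ) : Set ℕ :=
  MS S \ {x | ∃ a ∈ MS S, ∃ b ∈ MS S, x = a + b}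

/-- `a` is a maximal representation of `s`: a finitely supported coefficient
function on the minimal generators with `Σ aⱼ nⱼ = s` and `Σ aⱼ = ord s`. -/
def IsMaxRep (S : Set ℕ) (s : ℕ) (a : ℕ →₀ ℕ) : Prop :=
  (↑a.support : Set ℕ) ⊆ MinGens S ∧
  (a.sum fun n c => c * n) = s ∧
  (a.sum fun _ c => c) = ordS S s

/-- `|Supp(s)|`: the maximal number of distinct minimal generators appearing
in a maximal representation of `s`. -/
noncomputable def SuppCard (S : Set ℕ) (s : ℕ) : ℕ :=
  sSup {q | ∃ a : ℕ →₀ ℕ, IsMaxRep S s a ∧ a.support.card = q}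

/-- The Frobenius number of `S`. -/
noncomputable def Frob (S : Set ℕ) : ℕ := sSup Sᶜ

/-!
A maximal representation of `s` exhibits `s` as `s' + r`, with `s'` and `r` sums of `Σ bⱼ` and
`Σ (aⱼ - bⱼ)` elements of `M`. Since `ord` is superadditive, `ord s' + Σ (aⱼ - bⱼ) ≤ ord s = Σ aⱼ`,
so `ord s' ≤ Σ bⱼ`; the reverse inequality is the representation of `s'` itself.
-/

section Order

variable {S : Set ℕ}

lemma le_of_mem_nM : ∀ {h x : ℕ}, x ∈ nM S h → h ≤ x
  | 0, _, _ => Nat.zero_le _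
  | _ + 1, _, ⟨c, hc, _, hd, rfl⟩ => by
    have := le_of_mem_nM hd
    have := Nat.pos_of_ne_zero hc.2
    omega

lemma add_mem_nM : ∀ {h k x y : ℕ}, x ∈ nM S h → y ∈ nM S k → x + y ∈ nM S (h + k)
  | 0, k, x, y, hx, hy => by
    rw [nM, Set.mem_singleton_iff] at hx
    simpa [hx] using hy
  | h + 1, k, _, y, ⟨c, hc, d, hd, rfl⟩, hy => by
    rw [Nat.add_right_comm]
    exact ⟨c, hc, d + y, add_mem_nM hd hy, add_assoc c d y⟩

lemma mul_mem_nM {n : ℕ} (hn : n ∈ MS S) : ∀ k : ℕ, k * n ∈ nM S k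
  | 0 => by simp [nM]
  | k + 1 => ⟨n, hn, k * n, mul_mem_nM hn k, by ring⟩

lemma sum_mul_mem_nM {t : Finset ℕ} (ht : (↑t : Set ℕ) ⊆ MS S) (f : ℕ → ℕ) :
    ∑ n ∈ t, f n * n ∈ nM S (∑ n ∈ t, f n) := by
  induction t using Finset.induction_on with
  | empty => simp [nM]
  | insert n t hn ih =>
    rw [Finset.sum_insert hn, Finset.sum_insert hn]
    exact add_mem_nM (mul_mem_nM (ht (by simp)) _) (ih (subset_trans (by simp) ht))

lemma bddAbove_setOf_mem_nM (x : ℕ) : BddAbove {h | x ∈ nM S h} :=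
  ⟨x, fun _ => le_of_mem_nM⟩

lemma le_ordS_of_mem_nM {x h : ℕ} (hx : x ∈ nM S h) : h ≤ ordS S x :=
  le_csSup (bddAbove_setOf_mem_nM x) hx

lemma mem_nM_ordS {x h : ℕ} (hx : x ∈ nM S h) : x ∈ nM S (ordS S x) :=
  Nat.sSup_mem ⟨h, hx⟩ (bddAbove_setOf_mem_nM x)

lemma ordS_add_ordS_le {x y h k : ℕ} (hx : x ∈ nM S h) (hy : y ∈ nM S k) :
    ordS S x + ordS S y ≤ ordS S (x + y) :=
  le_ordS_of_mem_nM (add_mem_nM (mem_nM_ordS hx) (mem_nM_ordS hy))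

end Order

theorem stmt0_general (S : Set ℕ) (s : ℕ)
    (a : ℕ →₀ ℕ) (ha : IsMaxRep S s a) (b : ℕ →₀ ℕ) (hb : b ≤ a) :
    ordS S (b.sum fun n c => c * n) = b.sum fun _ c => c := by
  obtain ⟨ha_gens, ha_sum, ha_ord⟩ := ha
  have rep_mem : ∀ c ≤ a, (c.sum fun n k => k * n) ∈ nM S (c.sum fun _ k => k) := fun c hc =>
    sum_mul_mem_nM (fun n hn => (ha_gens (Finsupp.support_mono hc hn)).1) _
  have hbr : b + (a - b) = a := add_tsub_cancel_of_le hb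
  have h_sum : (b.sum fun n k => k * n) + (a - b).sum (fun n k => k * n) = s := by
    rw [← Finsupp.sum_add_index' (fun _ => zero_mul _) (fun _ _ _ => add_mul _ _ _), hbr, ha_sum]
  have h_len : (b.sum fun _ k => k) + (a - b).sum (fun _ k => k) = ordS S s := by
    rw [← Finsupp.sum_add_index' (fun _ => rfl) (fun _ _ _ => rfl), hbr, ha_ord]
  have hb_mem := rep_mem b hb
  have hr_mem := rep_mem (a - b) tsub_le_self
  have h_super := ordS_add_ordS_le hb_mem hr_mem
  rw [h_sum] at h_super
  have hr_le := le_ordS_of_mem_nM hr_mem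
  exact le_antisymm (by omega) (le_ordS_of_mem_nM hb_mem)

theorem stmt0 (S : Set ℕ) (hS : IsNumSgp S) (s : ℕ) (hs : s ∈ S)
    (a : ℕ →₀ ℕ) (ha : IsMaxRep S s a) (b : ℕ →₀ ℕ) (hb : b ≤ a) :
    ordS S (b.sum fun n c => c * n) = b.sum fun _ c => c :=
  stmt0_general S s a ha b hb
end

section
/- Let R = k[[S]] be a numerical semigroup ring with maximal ideal m. For every k ≥ 2, H_R(k) − H_R(k−1) = |C_k| − |D_k|, where H_R is the Hilbert function of the associated graded ring of R. -/
open Set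

/-!
Write `A` and `B` for the layers `(k-1)M \ kM` and `kM \ (k+1)M`, whose sizes are `H(k-1)` and
`H(k)`. Since `M + M ⊆ M`, the filtration `hM` decreases for `h ≥ 1`, so in positive degree the
layer `hM \ (h+1)M` is exactly the set of elements of order `h`. For `k ≥ 2` this gives
`C_k ⊆ B` and `D_k ⊆ A`, and translation by the multiplicity `e` maps `A \ D_k` bijectively onto
`B \ C_k`: an element `t` of order `k-1` has `t + e` of order `k` unless `t ∈ D_k`, and an element
`s` of order `k` outside `C_k` is `t + e` with `t ∈ (k-1)M`, which then has order exactly `k-1`.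
-/

namespace NumSgp

variable {S : Set ℕ}

def layer (S : Set ℕ) (h : ℕ) : Set ℕ := nM S h \ nM S (h + 1)

lemma le_of_mem_nM {k x : ℕ} (hx : x ∈ nM S k) : k ≤ x := by
  induction k generalizing x with
  | zero => omega
  | succ n ih =>
    obtain ⟨a, ha, b, hb, rfl⟩ := hx
    have : a ≠ 0 := ha.2
    have := ih hb
    omega

lemma add_mem_MS (hS : IsNumSgp S) {a b : ℕ} (ha : a ∈ MS S) (hb : b ∈ S) : a + b ∈ MS S :=
  ⟨hS.2.1 a ha.1 b hb, by have : a ≠ 0 := ha.2; simp only [mem_singleton_iff]; omega⟩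

lemma mult_mem_MS (hS : IsNumSgp S) : mult S ∈ MS S := by
  have hinf : S.Infinite := by simpa using hS.2.2.infinite_compl
  exact Nat.sInf_mem (hinf.sdiff (finite_singleton 0)).nonempty

lemma nM_subset (hS : IsNumSgp S) : ∀ k, nM S k ⊆ S
  | 0 => by simpa [nM] using hS.1
  | k + 1 => by
    rintro x ⟨a, ha, b, hb, rfl⟩
    exact hS.2.1 a ha.1 b (nM_subset hS k hb)

lemma nM_succ_subset (hS : IsNumSgp S) (k : ℕ) : nM S (k + 2) ⊆ nM S (k + 1) := by
  rintro x ⟨a, ha, b, ⟨a', ha', b', hb', rfl⟩, rfl⟩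
  exact ⟨a + a', add_mem_MS hS ha ha'.1, b', hb', by ring⟩

lemma nM_subset_of_le (hS : IsNumSgp S) {i j : ℕ} (hj : 1 ≤ j) (hij : j ≤ i) :
    nM S i ⊆ nM S j := by
  induction i, hij using Nat.le_induction with
  | base => rfl
  | succ n hn ih =>
    obtain ⟨m, rfl⟩ := Nat.exists_eq_add_of_le' (hj.trans hn)
    exact (nM_succ_subset hS m).trans ih

lemma le_ordS {s k : ℕ} (h : s ∈ nM S k) : k ≤ ordS S s :=
  le_csSup ⟨s, fun _ ↦ le_of_mem_nM⟩ h

lemma mem_layer_iff (hS : IsNumSgp S) {s k : ℕ} (hk : 1 ≤ k) :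
    s ∈ layer S k ↔ ordS S s = k := by
  have hbdd : BddAbove {h | s ∈ nM S h} := ⟨s, fun _ ↦ le_of_mem_nM⟩
  constructor
  · rintro ⟨hs, hs'⟩
    refine le_antisymm (csSup_le ⟨k, hs⟩ fun h hh ↦ ?_) (le_ordS hs)
    by_contra! hkh
    exact hs' (nM_subset_of_le hS (by omega) hkh hh)
  · intro hord
    have hne : {h | s ∈ nM S h}.Nonempty := by
      by_contra! hempty
      simp only [ordS, hempty, csSup_empty, bot_eq_zero'] at hord
      omega
    refine ⟨hord ▸ Nat.sSup_mem hne hbdd, fun h ↦ ?_⟩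
    have := le_ordS h
    omega

lemma mul_add_mem_nM {a r : ℕ} (ha : a ∈ MS S) (hr : r ∈ MS S) :
    ∀ j, a * j + r ∈ nM S (j + 1)
  | 0 => ⟨r, hr, 0, rfl, by ring⟩
  | j + 1 => ⟨a, ha, a * j + r, mul_add_mem_nM ha hr j, by ring⟩

lemma layer_finite (hS : IsNumSgp S) (k : ℕ) : (layer S k).Finite := by
  obtain ⟨N, hN⟩ := hS.2.2.bddAbove
  refine (finite_Iic (N + mult S * k)).subset fun s ⟨_, hs⟩ ↦ ?_
  by_contra! hlt
  rw [mem_Iic, not_le] at hlt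
  have hr : s - mult S * k ∈ MS S :=
    ⟨by_contra fun h ↦ by have := hN h; omega, by simp only [mem_singleton_iff]; omega⟩
  have := mul_add_mem_nM (mult_mem_MS hS) hr k
  rw [Nat.add_sub_cancel' (by omega)] at this
  exact hs this

lemma CK_subset_layer (hS : IsNumSgp S) {k : ℕ} (hk : 1 ≤ k) : CK S k ⊆ layer S k :=
  fun _ hs ↦ (mem_layer_iff hS hk).2 hs.2.1

lemma DK_subset_layer (hS : IsNumSgp S) {j : ℕ} (hj : 1 ≤ j) : DK S (j + 1) ⊆ layer S j :=
  fun _ hs ↦ (mem_layer_iff hS hj).2 hs.2.1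

lemma image_add_mult_layer_diff_DK (hS : IsNumSgp S) {j : ℕ} (hj : 1 ≤ j) :
    (· + mult S) '' (layer S j \ DK S (j + 1)) = layer S (j + 1) \ CK S (j + 1) := by
  have he := mult_mem_MS hS
  ext s
  constructor
  · rintro ⟨t, ⟨htl, htD⟩, rfl⟩
    have htord := (mem_layer_iff hS hj).1 htl
    have hmem : t + mult S ∈ nM S (j + 1) := ⟨mult S, he, t, htl.1, by ring⟩
    have hord : ordS S (t + mult S) = j + 1 :=
      le_antisymm (not_lt.1 fun h ↦ htD ⟨nM_subset hS j htl.1, htord, h⟩) (le_ordS hmem)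
    exact ⟨(mem_layer_iff hS (by omega)).2 hord, fun hC ↦ hC.2.2 t htl.1 rfl⟩
  · rintro ⟨hsl, hsC⟩
    have hord := (mem_layer_iff hS (by omega)).1 hsl
    obtain ⟨t, ht, rfl⟩ : ∃ t ∈ nM S j, t + mult S = s := by
      by_contra! h
      exact hsC ⟨nM_subset hS _ hsl.1, hord, h⟩
    have htl : t ∈ layer S j := ⟨ht, fun h ↦ hsl.2 ⟨mult S, he, t, h, by ring⟩⟩
    exact ⟨t, ⟨htl, fun htD ↦ by have := htD.2.2; omega⟩, rfl⟩

end NumSgp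

open NumSgp in
theorem stmt2 (S : Set ℕ) (hS : IsNumSgp S) (k : ℕ) (hk : 2 ≤ k) :
    (HF S k : ℤ) - (HF S (k - 1) : ℤ) =
      ((CK S k).ncard : ℤ) - ((DK S k).ncard : ℤ) := by
  obtain ⟨j, rfl⟩ : ∃ j, k = j + 1 := ⟨k - 1, by omega⟩
  have hj : 1 ≤ j := by omega
  have hC := ncard_sdiff_add_ncard_of_subset (CK_subset_layer hS (by omega)) (layer_finite hS (j + 1))
  have hD := ncard_sdiff_add_ncard_of_subset (DK_subset_layer hS hj) (layer_finite hS j)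
  have hCD : (layer S (j + 1) \ CK S (j + 1)).ncard = (layer S j \ DK S (j + 1)).ncard := by
    rw [← image_add_mult_layer_diff_DK hS hj, ncard_image_of_injective _ (add_left_injective _)]
  change ((layer S (j + 1)).ncard : ℤ) - ((layer S (j + 1 - 1)).ncard : ℤ) = _
  rw [Nat.add_sub_cancel]
  omega
end

section
/- Let S be a numerical semigroup with multiplicity e and d = max{ord(σ) : σ ∈ Ap}. If g ∈ D_k and ord(g+e) = k + p, then p ≤ d − 1. -/
open Set

/-! Write `g + e = u + v` with `u ∈ (p+1)M` and `v ∈ (k-1)M`, using `ord (g + e) = k + p`.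
If `u` were not in the Apéry set, then `u = t + e` with `t ∈ M` (as `u ≥ 2e`), so
`g = t + v ∈ kM`, contradicting `ord g = k - 1`. Hence `u ∈ Ap` has order at least `p + 1`. -/

variable {S : Set ℕ}

lemma mult_le_of_mem_MS {m : ℕ} (hm : m ∈ MS S) : mult S ≤ m := Nat.sInf_le hm

lemma mem_nM_one {s : ℕ} (hs : s ∈ MS S) : s ∈ nM S 1 := ⟨s, hs, 0, rfl, rfl⟩

lemma mul_mult_le_of_mem_nM : ∀ {h s : ℕ}, s ∈ nM S h → h * mult S ≤ s
  | 0, _, _ => by simp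
  | _ + 1, _, ⟨a, ha, _, hb, rfl⟩ => by
    have := mult_le_of_mem_MS ha
    have := mul_mult_le_of_mem_nM hb
    rw [Nat.succ_mul]
    omega

lemma add_mem_nM_add : ∀ {a b x y : ℕ}, x ∈ nM S a → y ∈ nM S b → x + y ∈ nM S (a + b)
  | 0, _, _, _, rfl, hy => by simpa using hy
  | a + 1, b, _, y, ⟨m, hm, r, hr, rfl⟩, hy => by
    rw [Nat.add_right_comm]
    exact ⟨m, hm, r + y, add_mem_nM_add hr hy, by omega⟩

lemma exists_add_of_mem_nM_add :
    ∀ {a b s : ℕ}, s ∈ nM S (a + b) → ∃ x ∈ nM S a, ∃ y ∈ nM S b, s = x + y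
  | 0, _, s, hs => ⟨0, rfl, s, by simpa using hs, by omega⟩
  | a + 1, b, _, hs => by
    rw [Nat.add_right_comm] at hs
    obtain ⟨m, hm, r, hr, rfl⟩ := hs
    obtain ⟨x, hx, y, hy, rfl⟩ := exists_add_of_mem_nM_add hr
    exact ⟨m + x, ⟨m, hm, x, hx, rfl⟩, y, hy, by omega⟩

namespace IsNumSgp

lemma mult_mem_MS (hS : IsNumSgp S) : mult S ∈ MS S := by
  have hinf : S.Infinite := by simpa using hS.2.2.infinite_compl
  exact Nat.sInf_mem (hinf.sdiff (finite_singleton 0)).nonempty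

lemma mult_pos (hS : IsNumSgp S) : 0 < mult S :=
  Nat.pos_of_ne_zero hS.mult_mem_MS.2

lemma nM_subset (hS : IsNumSgp S) : ∀ {h : ℕ}, nM S h ⊆ S
  | 0, _, rfl => hS.1
  | _ + 1, _, ⟨a, ha, _, hb, rfl⟩ => hS.2.1 a ha.1 _ (hS.nM_subset hb)

lemma le_of_mem_nM (hS : IsNumSgp S) {h s : ℕ} (hs : s ∈ nM S h) : h ≤ s :=
  (Nat.le_mul_of_pos_right h hS.mult_pos).trans (mul_mult_le_of_mem_nM hs)

lemma bddAbove_setOf_mem_nM (hS : IsNumSgp S) (s : ℕ) : BddAbove {h | s ∈ nM S h} :=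
  ⟨s, fun _ => hS.le_of_mem_nM⟩

lemma le_ordS_of_mem_nM (hS : IsNumSgp S) {h s : ℕ} (hs : s ∈ nM S h) : h ≤ ordS S s :=
  le_csSup (hS.bddAbove_setOf_mem_nM s) hs

lemma mem_nM_ordS (hS : IsNumSgp S) {s : ℕ} (hs : s ∈ S) : s ∈ nM S (ordS S s) := by
  have hne : {h | s ∈ nM S h}.Nonempty := by
    by_cases hs0 : s = 0
    · exact ⟨0, hs0⟩
    · exact ⟨1, mem_nM_one ⟨hs, hs0⟩⟩
  exact Nat.sSup_mem hne (hS.bddAbove_setOf_mem_nM s)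

/-- For `s ∈ Ap` we have `s - e ∉ S`, so `ord s ≤ s ≤ F(S) + e`. -/
lemma bddAbove_ordS_image_Ap (hS : IsNumSgp S) : BddAbove (ordS S '' Ap S) := by
  refine ⟨sSup Sᶜ + mult S, ?_⟩
  rintro _ ⟨s, hs, rfl⟩
  have hord : ordS S s ≤ s := csSup_le' fun _ => hS.le_of_mem_nM
  by_cases hle : s ≤ mult S
  · omega
  · have hsc : s - mult S ∈ Sᶜ := fun hmem => hs.2 _ hmem (by omega)
    have := le_csSup hS.2.2.bddAbove hsc
    omega

lemma mem_Ap_of_add_mult_eq_add (hS : IsNumSgp S) {g u v q j : ℕ} (hq : 2 ≤ q)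
    (hu : u ∈ nM S q) (hv : v ∈ nM S j) (hg : ordS S g ≤ j) (h : g + mult S = u + v) :
    u ∈ Ap S := by
  refine ⟨hS.nM_subset hu, fun t ht hte => ?_⟩
  have hu2 : 2 * mult S ≤ u :=
    (Nat.mul_le_mul_right _ hq).trans (mul_mult_le_of_mem_nM hu)
  have ht0 : t ≠ 0 := by have := hS.mult_pos; omega
  have hgtv : g = t + v := by omega
  have hgj : g ∈ nM S (1 + j) := hgtv ▸ add_mem_nM_add (mem_nM_one ⟨ht, ht0⟩) hv
  have := hS.le_ordS_of_mem_nM hgj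
  omega

end IsNumSgp

theorem stmt6 (S : Set ℕ) (hS : IsNumSgp S) (k p : ℕ) (hk : 2 ≤ k)
    (g : ℕ) (hg : g ∈ DK S k) (hord : ordS S (g + mult S) = k + p) :
    p ≤ sSup (ordS S '' Ap S) - 1 := by
  obtain ⟨hgS, hordg, hlt⟩ := hg
  have hp : 1 ≤ p := by omega
  have hge : g + mult S ∈ nM S ((p + 1) + (k - 1)) := by
    have := hS.mem_nM_ordS (hS.2.1 g hgS _ hS.mult_mem_MS.1)
    rwa [hord, show k + p = (p + 1) + (k - 1) by omega] at this
  obtain ⟨u, hu, v, hv, huv⟩ := exists_add_of_mem_nM_add hge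
  have huAp : u ∈ Ap S :=
    hS.mem_Ap_of_add_mult_eq_add (by omega) hu hv hordg.le huv
  have hordu := hS.le_ordS_of_mem_nM hu
  have hd := le_csSup hS.bddAbove_ordS_image_Ap (mem_image_of_mem (ordS S) huAp)
  omega
end

section
/- Let S be a numerical semigroup with multiplicity e and k ≥ 2. Let x, y ∈ D_k with ord(x+e) ≥ k+2 and ord(y+e) = h ≤ k+1. Then y + e cannot be induced by a maximal representation of x + e, i.e. there is no s ∈ S with ord(s) ≥ 1 and x + e = (y + e) + s. -/
open Set

/-! The order is superadditive on `S`, so `x = y + s` with `ord s ≥ 1` would force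
`ord x ≥ ord y + 1 = k`, whereas `x ∈ D_k` has order `k - 1`. -/

namespace NumSgp

variable {S : Set ℕ}

lemma le_of_mem_nM_s9 {h s : ℕ} (hs : s ∈ nM S h) : h ≤ s := by
  induction h generalizing s with
  | zero => simp only [nM, mem_singleton_iff] at hs; omega
  | succ n ih =>
    obtain ⟨a, ha, b, hb, rfl⟩ := hs
    have ha0 : a ≠ 0 := ha.2
    have := ih hb
    omega

lemma add_mem_nM_add {p q a b : ℕ} (ha : a ∈ nM S p) (hb : b ∈ nM S q) :
    a + b ∈ nM S (p + q) := by
  induction p generalizing a with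
  | zero =>
    simp only [nM, mem_singleton_iff] at ha
    simpa [ha] using hb
  | succ n ih =>
    obtain ⟨c, hc, d, hd, rfl⟩ := ha
    rw [Nat.add_right_comm]
    exact ⟨c, hc, d + b, ih hd, by omega⟩

lemma bddAbove_setOf_mem_nM (s : ℕ) : BddAbove {h | s ∈ nM S h} :=
  ⟨s, fun _ => le_of_mem_nM_s9⟩

lemma le_ordS_of_mem_nM {s h : ℕ} (hs : s ∈ nM S h) : h ≤ ordS S s :=
  le_csSup (bddAbove_setOf_mem_nM s) hs

lemma mem_nM_ordS {s : ℕ} (hs : s ∈ S) : s ∈ nM S (ordS S s) := by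
  have hne : {h | s ∈ nM S h}.Nonempty := by
    rcases eq_or_ne s 0 with rfl | hs0
    · exact ⟨0, rfl⟩
    · exact ⟨1, s, ⟨hs, hs0⟩, 0, rfl, rfl⟩
  exact Nat.sSup_mem hne (bddAbove_setOf_mem_nM s)

lemma ordS_add_le_ordS_add {a b : ℕ} (ha : a ∈ S) (hb : b ∈ S) :
    ordS S a + ordS S b ≤ ordS S (a + b) :=
  le_ordS_of_mem_nM (add_mem_nM_add (mem_nM_ordS ha) (mem_nM_ordS hb))

end NumSgp

open NumSgp in
theorem stmt9_general (S : Set ℕ) (k : ℕ)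
    (x y : ℕ) (hx : x ∈ DK S k) (hy : y ∈ DK S k) :
    ¬ ∃ s ∈ S, 1 ≤ ordS S s ∧ x + mult S = (y + mult S) + s := by
  rintro ⟨s, hsS, hords, heq⟩
  obtain ⟨-, hordx, -⟩ := hx
  obtain ⟨hyS, hordy, -⟩ := hy
  have hxy : x = y + s := by omega
  have hsuper : ordS S y + ordS S s ≤ ordS S x := hxy ▸ ordS_add_le_ordS_add hyS hsS
  omega

theorem stmt9 (S : Set ℕ) (hS : IsNumSgp S) (k h : ℕ) (hk : 2 ≤ k)
    (x y : ℕ) (hx : x ∈ DK S k) (hy : y ∈ DK S k)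
    (hox : k + 2 ≤ ordS S (x + mult S)) (hoy : ordS S (y + mult S) = h)
    (hh : h ≤ k + 1) :
    ¬ ∃ s ∈ S, 1 ≤ ordS S s ∧ x + mult S = (y + mult S) + s :=
  stmt9_general S k x y hx hy
end
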